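/- For every m ≥ 0 and w ∈ 𝔥, one has σ̄_m(w) = Σ_{j=0}^{m} f_j(σ_{m-j}(w)), where σ̄_m = τ ∘ σ_m ∘ τ. -/

import Mathlib

open scoped BigOperators

abbrev Ltr := Fin 2

/-- `𝔥 = ℚ⟨x,y⟩`, realized as the monoid algebra of the free monoid on two letters. -/
abbrev H := MonoidAlgebra ℚ (FreeMonoid Ltr)

/-- The word `u₁⋯u_m` as an element of `𝔥`. -/
noncomputable def wrd (l : List Ltr) : H := MonoidAlgebra.of ℚ (FreeMonoid Ltr) (FreeMonoid.ofList l)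

/-- The generator `x`. -/
noncomputable def Xh : H := wrd [0]
/-- The generator `y`. -/
noncomputable def Yh : H := wrd [1]

/-- `dn n w = yⁿ ⋄ w` where `⋄` is the bilinear map with `1⋄w = w⋄1 = w`,
`yw₁ ⋄ yw₂ = y(yw₁ ⋄ w₂) - y(w₁ ⋄ xw₂)` and `yw₁ ⋄ xw₂ = x(yw₁ ⋄ w₂) + y(w₁ ⋄ xw₂)`. -/
noncomputable def dn : ℕ → List Ltr → H
  | 0, u => wrd u
  | n + 1, [] => wrd (List.replicate (n + 1) 1)
  | n + 1, a :: u =>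
      if a = 0 then Xh * dn (n + 1) u + Yh * dn n (a :: u)
      else Yh * dn (n + 1) u - Yh * dn n ((0 : Ltr) :: u)
termination_by n u => (n, u.length)

/-- `dia n f = yⁿ ⋄ f`, extended linearly. -/
noncomputable def dia (n : ℕ) (f : H) : H := f.coeff.sum fun u c => c • dn n u.toList

/-- `f_n : 𝔥 → 𝔥` for `n ∈ ℤ`: `f_n = 0` for `n < 0`, `f₀ = id`, and
`f_n(w) = yⁿ ⋄ w - (y^{n-1} ⋄ w)y` for `n ≥ 1`. -/
noncomputable def fZ (n : ℤ) (f : H) : H :=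
  if n < 0 then 0 else if n = 0 then f else dia n.toNat f - dia (n.toNat - 1) f * Yh

abbrev PS := PowerSeries H

/-- The ring homomorphism `σ : 𝔥 → 𝔥[[T]]` with `σ(x) = x` and `σ(y) = y(1-xT)⁻¹`. -/
noncomputable def sigmaH : H →ₐ[ℚ] PS :=
  MonoidAlgebra.lift ℚ PS (FreeMonoid Ltr)
    (FreeMonoid.lift fun a =>
      if a = 0 then PowerSeries.C Xh else PowerSeries.mk fun n => Yh * Xh ^ n)

/-- `σ_m`, the coefficient of `T^m` in `σ`. -/
noncomputable def sigm (m : ℕ) (f : H) : H := PowerSeries.coeff m (sigmaH f)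

/-- The anti-automorphism `τ` with `τ(x) = y`, `τ(y) = x`. -/
noncomputable def tauH (f : H) : H :=
  MonoidAlgebra.ofCoeff <| Finsupp.mapDomain
    (fun l => FreeMonoid.ofList
      (((FreeMonoid.toList l).reverse).map fun a => if a = 0 then (1 : Ltr) else 0)) f.coeff


/-! Let `F : 𝔥[[T]] → 𝔥[[T]]` be the `T`-linear map `F(p) = Σ_j T^j f_j(p)` (`fConv`) and
`σ̄ = Σ_m T^m σ̄_m` (`sigmaBar`), a ring homomorphism with `σ̄(x) = (1-yT)⁻¹x` and `σ̄(y) = y`.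
The recursions defining `⋄` give `F(xp) = xF(p) + yT F(xp)`, i.e. `F(xp) = (1-yT)⁻¹x F(p)`, and
`F(yp) = yF(p) - yT F(xp)`; applied to `p = (1-xT)⁻¹q` the latter reads `F(y(1-xT)⁻¹q) = yF(q)`.
So `σ̄` and `F ∘ σ` agree on `1` and transform alike under left multiplication by `x` and `y`,
whence `σ̄ = F ∘ σ`; the theorem is the coefficient of `T^m` of this identity. -/

open PowerSeries Finset

lemma wrd_append (l₁ l₂ : List Ltr) : wrd (l₁ ++ l₂) = wrd l₁ * wrd l₂ := by
  rw [wrd, wrd, wrd, ← map_mul]; rfl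

lemma wrd_cons (a : Ltr) (l : List Ltr) : wrd (a :: l) = wrd [a] * wrd l := wrd_append [a] l

lemma wrd_nil : wrd [] = 1 := rfl

lemma Xh_mul_wrd (l : List Ltr) : Xh * wrd l = wrd (0 :: l) := (wrd_cons 0 l).symm

lemma Yh_mul_wrd (l : List Ltr) : Yh * wrd l = wrd (1 :: l) := (wrd_cons 1 l).symm

lemma wrd_replicate (n : ℕ) (a : Ltr) : wrd (List.replicate n a) = wrd [a] ^ n := by
  induction n with
  | zero => rfl
  | succ n ih => rw [List.replicate_succ, wrd_cons, ih, pow_succ']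

theorem H.induction_on_wrd {p : H → Prop} (w : H) (word : ∀ l, p (wrd l))
    (add : ∀ v w, p v → p w → p (v + w)) (smul : ∀ (c : ℚ) w, p w → p (c • w)) : p w := by
  induction w using MonoidAlgebra.induction_linear with
  | zero => simpa using smul 0 _ (word [])
  | add v w hv hw => exact add v w hv hw
  | single g c =>
    convert smul c _ (word g.toList)
    simp [wrd]

theorem H.induction_on {p : H → Prop} (w : H) (one : p 1)
    (x_mul : ∀ w, p w → p (Xh * w)) (y_mul : ∀ w, p w → p (Yh * w))
    (add : ∀ v w, p v → p w → p (v + w)) (smul : ∀ (c : ℚ) w, p w → p (c • w)) : p w := by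
  refine H.induction_on_wrd w (fun l => ?_) add smul
  induction l with
  | nil => exact one
  | cons a l ih =>
    rw [wrd_cons]
    fin_cases a
    · exact x_mul _ ih
    · exact y_mul _ ih

noncomputable def tauLin : H →ₗ[ℚ] H where
  toFun := tauH
  map_add' _ _ := congrArg MonoidAlgebra.ofCoeff Finsupp.mapDomain_add
  map_smul' c f := congrArg MonoidAlgebra.ofCoeff (Finsupp.mapDomain_smul c f.coeff)

lemma tauLin_apply (f : H) : tauLin f = tauH f := rfl

lemma tauH_add (v w : H) : tauH (v + w) = tauH v + tauH w := map_add tauLin v w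

lemma tauH_smul (c : ℚ) (w : H) : tauH (c • w) = c • tauH w := map_smul tauLin c w

lemma tauH_wrd (l : List Ltr) :
    tauH (wrd l) = wrd (l.reverse.map fun a => if a = 0 then 1 else 0) :=
  congrArg MonoidAlgebra.ofCoeff Finsupp.mapDomain_single

lemma tauH_mul (v w : H) : tauH (v * w) = tauH w * tauH v := by
  induction v using H.induction_on_wrd with
  | word l =>
    induction w using H.induction_on_wrd with
    | word l' => simp only [← wrd_append, tauH_wrd, List.reverse_append, List.map_append]
    | add w w' h h' => rw [mul_add, tauH_add, tauH_add, h, h', add_mul]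
    | smul c w h => rw [mul_smul_comm, tauH_smul, tauH_smul, h, smul_mul_assoc]
  | add v v' h h' => rw [add_mul, tauH_add, tauH_add, h, h', mul_add]
  | smul c v h => rw [smul_mul_assoc, tauH_smul, tauH_smul, h, mul_smul_comm]

lemma tauH_one : tauH 1 = 1 := tauH_wrd []

lemma tauH_X : tauH Xh = Yh := tauH_wrd [0]

lemma tauH_Y : tauH Yh = Xh := tauH_wrd [1]

lemma tauH_pow (v : H) (n : ℕ) : tauH (v ^ n) = tauH v ^ n := by
  induction n with
  | zero => exact tauH_one
  | succ n ih => rw [pow_succ, tauH_mul, ih, pow_succ']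

noncomputable def diaLin (n : ℕ) : H →ₗ[ℚ] H :=
  Finsupp.linearCombination ℚ (fun u => dn n u.toList) ∘ₗ
    (MonoidAlgebra.coeffLinearEquiv ℚ).toLinearMap

lemma diaLin_apply (n : ℕ) (f : H) : diaLin n f = dia n f :=
  Finsupp.linearCombination_apply ℚ f.coeff

lemma diaLin_wrd (n : ℕ) (l : List Ltr) : diaLin n (wrd l) = dn n l := by
  simp [diaLin, wrd]

lemma diaLin_zero_apply (f : H) : diaLin 0 f = f := by
  induction f using H.induction_on_wrd with
  | word l => rw [diaLin_wrd, dn]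
  | add v w hv hw => rw [map_add, hv, hw]
  | smul c w hw => rw [map_smul, hw]

lemma diaLin_one (n : ℕ) : diaLin n 1 = Yh ^ n := by
  cases n with
  | zero => rw [diaLin_zero_apply, pow_zero]
  | succ n =>
    rw [← wrd_nil, diaLin_wrd, dn, wrd_replicate, Yh]

lemma diaLin_succ_X_mul (n : ℕ) (f : H) :
    diaLin (n + 1) (Xh * f) = Xh * diaLin (n + 1) f + Yh * diaLin n (Xh * f) := by
  induction f using H.induction_on_wrd with
  | word l => rw [Xh_mul_wrd, diaLin_wrd, diaLin_wrd, diaLin_wrd, dn, if_pos rfl]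
  | add v w hv hw => simp only [mul_add, map_add, hv, hw]; abel
  | smul c w hw => simp only [mul_smul_comm, map_smul, hw, smul_add]

lemma diaLin_succ_Y_mul (n : ℕ) (f : H) :
    diaLin (n + 1) (Yh * f) = Yh * diaLin (n + 1) f - Yh * diaLin n (Xh * f) := by
  induction f using H.induction_on_wrd with
  | word l =>
    rw [Yh_mul_wrd, Xh_mul_wrd, diaLin_wrd, diaLin_wrd, diaLin_wrd, dn, if_neg (by decide)]
  | add v w hv hw => simp only [mul_add, map_add, hv, hw]; abel
  | smul c w hw => simp only [mul_smul_comm, map_smul, hw, smul_sub]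

noncomputable def fLin : ℕ → H →ₗ[ℚ] H
  | 0 => LinearMap.id
  | n + 1 => diaLin (n + 1) - LinearMap.mulRight ℚ Yh ∘ₗ diaLin n

lemma fLin_apply (n : ℕ) (f : H) : fLin n f = fZ n f := by
  cases n with
  | zero => simp [fLin, fZ]
  | succ n =>
    rw [fZ, if_neg (by omega), if_neg (by omega)]
    simp [fLin, diaLin_apply]

lemma fLin_zero_apply (f : H) : fLin 0 f = f := rfl

lemma fLin_succ_apply (n : ℕ) (f : H) : fLin (n + 1) f = diaLin (n + 1) f - diaLin n f * Yh := rfl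

lemma fLin_succ_one (n : ℕ) : fLin (n + 1) 1 = 0 := by
  rw [fLin_succ_apply, diaLin_one, diaLin_one, pow_succ, sub_self]

lemma fLin_succ_X_mul (n : ℕ) (f : H) :
    fLin (n + 1) (Xh * f) = Xh * fLin (n + 1) f + Yh * fLin n (Xh * f) := by
  cases n with
  | zero =>
    simp only [fLin_succ_apply, fLin_zero_apply, diaLin_succ_X_mul, diaLin_zero_apply]
    noncomm_ring
  | succ n =>
    simp only [fLin_succ_apply, diaLin_succ_X_mul]
    noncomm_ring

lemma fLin_succ_Y_mul (n : ℕ) (f : H) :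
    fLin (n + 1) (Yh * f) = Yh * fLin (n + 1) f - Yh * fLin n (Xh * f) := by
  cases n with
  | zero =>
    simp only [fLin_succ_apply, fLin_zero_apply, diaLin_succ_Y_mul, diaLin_zero_apply]
    noncomm_ring
  | succ n =>
    simp only [fLin_succ_apply, diaLin_succ_Y_mul]
    noncomm_ring

section Geom

variable {R : Type*} [Ring R]

noncomputable def geomSeries (a : R) : R⟦X⟧ := mk (a ^ ·)

lemma one_sub_C_mul_X_mul_geomSeries (a : R) : (1 - C a * X) * geomSeries a = 1 := by
  ext (_ | n) <;> simp [sub_mul, mul_assoc, geomSeries, coeff_one, pow_succ']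

lemma geomSeries_mul_one_sub_C_mul_X (a : R) : geomSeries a * (1 - C a * X) = 1 := by
  ext (_ | n) <;> simp [mul_sub, ← mul_assoc, geomSeries, coeff_one, pow_succ]

end Geom

noncomputable def tauPS : PS →ₗ[ℚ] PS where
  toFun p := mk fun n => tauH (coeff n p)
  map_add' p q := by ext n : 1; simp [tauH_add]
  map_smul' c p := by ext n : 1; simp [tauH_smul]

@[simp] lemma coeff_tauPS (n : ℕ) (p : PS) : coeff n (tauPS p) = tauH (coeff n p) :=
  coeff_mk n fun n => tauH (coeff n p)

lemma tauPS_mul (p q : PS) : tauPS (p * q) = tauPS q * tauPS p := by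
  ext n
  simp only [coeff_tauPS, coeff_mul, ← tauLin_apply, map_sum]
  rw [← Nat.sum_antidiagonal_swap]
  simp [tauLin_apply, tauH_mul]

lemma tauPS_C (a : H) : tauPS (C a) = C (tauH a) := by
  ext n : 1
  rw [coeff_tauPS, coeff_C, coeff_C]
  split_ifs
  · rfl
  · exact map_zero tauLin

lemma tauPS_geom (a : H) : tauPS (geomSeries a) = geomSeries (tauH a) := by
  ext n
  simp [geomSeries, tauH_pow]

lemma sigmaH_X : sigmaH Xh = C Xh := by
  rw [sigmaH, Xh, wrd, MonoidAlgebra.lift_of]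
  simp

lemma sigmaH_Y : sigmaH Yh = C Yh * geomSeries Xh := by
  rw [sigmaH, Yh, wrd, MonoidAlgebra.lift_of]
  ext n
  simp [geomSeries]

noncomputable def sigmaBar : H →ₗ[ℚ] PS := tauPS ∘ₗ sigmaH.toLinearMap ∘ₗ tauLin

lemma coeff_sigmaBar (m : ℕ) (w : H) : coeff m (sigmaBar w) = tauH (sigm m (tauH w)) :=
  coeff_tauPS m _

lemma sigmaBar_mul (v w : H) : sigmaBar (v * w) = sigmaBar v * sigmaBar w := by
  simp [sigmaBar, tauLin_apply, tauH_mul, tauPS_mul]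

lemma sigmaBar_one : sigmaBar 1 = 1 := by
  simpa [sigmaBar, tauLin_apply, tauH_one] using tauPS_C 1

lemma sigmaBar_X : sigmaBar Xh = geomSeries Yh * C Xh := by
  simp [sigmaBar, tauLin_apply, tauH_X, sigmaH_Y, tauPS_mul, tauPS_C, tauPS_geom, tauH_Y]

lemma sigmaBar_Y : sigmaBar Yh = C Yh := by
  simp [sigmaBar, tauLin_apply, tauH_Y, sigmaH_X, tauPS_C, tauH_X]

noncomputable def fConv : PS →ₗ[ℚ] PS where
  toFun p := mk fun n => ∑ ij ∈ antidiagonal n, fLin ij.1 (coeff ij.2 p)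
  map_add' p q := by ext n : 1; simp [sum_add_distrib]
  map_smul' c p := by ext n : 1; simp [smul_sum]

lemma coeff_fConv (n : ℕ) (p : PS) :
    coeff n (fConv p) = ∑ ij ∈ antidiagonal n, fLin ij.1 (coeff ij.2 p) :=
  coeff_mk n fun n => ∑ ij ∈ antidiagonal n, fLin ij.1 (coeff ij.2 p)

lemma fConv_one : fConv 1 = 1 := by
  ext (_ | n) : 1
  · simp [coeff_fConv, fLin_zero_apply]
  · rw [coeff_fConv, Nat.sum_antidiagonal_succ']
    simp [coeff_one, fLin_succ_one]

lemma fConv_X_mul (p : PS) : fConv (X * p) = X * fConv p := by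
  ext (_ | n) : 1
  · simp [coeff_fConv]
  · rw [coeff_fConv, Nat.sum_antidiagonal_succ', coeff_succ_X_mul, coeff_fConv]
    simp [coeff_succ_X_mul]

lemma fConv_C_X_mul_eq_add (p : PS) :
    fConv (C Xh * p) = C Xh * fConv p + C Yh * X * fConv (C Xh * p) := by
  ext (_ | n) : 1
  · simp only [mul_assoc, map_add, coeff_C_mul, coeff_zero_X_mul, mul_zero, add_zero, coeff_fConv,
      Nat.antidiagonal_zero, sum_singleton, fLin_zero_apply]
  · rw [mul_assoc, map_add, coeff_C_mul, coeff_C_mul, coeff_succ_X_mul]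
    simp only [coeff_fConv, Nat.sum_antidiagonal_succ, coeff_C_mul, fLin_succ_X_mul,
      fLin_zero_apply, sum_add_distrib, mul_sum, mul_add]
    abel

lemma fConv_C_Y_mul (p : PS) :
    fConv (C Yh * p) = C Yh * fConv p - C Yh * X * fConv (C Xh * p) := by
  ext (_ | n) : 1
  · simp only [mul_assoc, map_sub, coeff_C_mul, coeff_zero_X_mul, mul_zero, sub_zero, coeff_fConv,
      Nat.antidiagonal_zero, sum_singleton, fLin_zero_apply]
  · rw [mul_assoc, map_sub, coeff_C_mul, coeff_C_mul, coeff_succ_X_mul]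
    simp only [coeff_fConv, Nat.sum_antidiagonal_succ, coeff_C_mul, fLin_succ_Y_mul,
      fLin_zero_apply, sum_sub_distrib, mul_sum, mul_add]
    abel

lemma fConv_C_X_mul (p : PS) : fConv (C Xh * p) = geomSeries Yh * C Xh * fConv p := by
  calc fConv (C Xh * p)
      = geomSeries Yh * ((1 - C Yh * X) * fConv (C Xh * p)) := by
        rw [← mul_assoc, geomSeries_mul_one_sub_C_mul_X, one_mul]
    _ = geomSeries Yh * C Xh * fConv p := by
        rw [sub_mul, one_mul, sub_eq_of_eq_add (fConv_C_X_mul_eq_add p), mul_assoc]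

theorem sigmaBar_eq_fConv_sigmaH (w : H) : sigmaBar w = fConv (sigmaH w) := by
  induction w using H.induction_on with
  | one => rw [sigmaBar_one, map_one, fConv_one]
  | x_mul w ih => rw [sigmaBar_mul, sigmaBar_X, ih, map_mul, sigmaH_X, fConv_C_X_mul]
  | y_mul w ih =>
    have hw : sigmaH w = geomSeries Xh * sigmaH w - X * (C Xh * (geomSeries Xh * sigmaH w)) := by
      calc sigmaH w = (1 - C Xh * X) * (geomSeries Xh * sigmaH w) := by
            rw [← mul_assoc, one_sub_C_mul_X_mul_geomSeries, one_mul]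
        _ = _ := by rw [sub_mul, one_mul, (commute_X (C Xh)).eq, mul_assoc]
    rw [sigmaBar_mul, sigmaBar_Y, ih, map_mul, sigmaH_Y, mul_assoc, fConv_C_Y_mul, mul_assoc,
      ← mul_sub, ← fConv_X_mul, ← map_sub, ← hw]
  | add v w hv hw => rw [map_add, map_add, map_add, hv, hw]
  | smul c w hw => rw [map_smul, map_smul, map_smul, hw]

/-- For `m ≥ 0` and `w ∈ 𝔥`:
`σ̄_m(w) = Σ_{j=0}^{m} f_j(σ_{m-j}(w))`, where `σ̄_m = τ ∘ σ_m ∘ τ`. -/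
theorem stmt9 (m : ℕ) (w : H) :
    tauH (sigm m (tauH w)) = ∑ j ∈ Finset.range (m + 1), fZ (j : ℤ) (sigm (m - j) w) := by
  have h := congrArg (coeff m) (sigmaBar_eq_fConv_sigmaH w)
  rw [coeff_sigmaBar, coeff_fConv,
    Nat.sum_antidiagonal_eq_sum_range_succ fun i j => fLin i (coeff j (sigmaH w))] at h
  simp only [fLin_apply] at h
  exact h
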